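/- arXiv:2312.03691 — 8 statements merged into one kernel-verified Lean document; each statement's English description precedes it below -/
import Mathlib

section
/- For any real numbers a_{ij}, b_{ij}, c_{ij} (i,j ∈ [n]), we have ∑_{i,j,k} a_{ij} b_{jk} c_{ki} ≤ sqrt( (∑_{ij} a_{ij}²)(∑_{ij} b_{ij}²)(∑_{ij} c_{ij}²) ). -/
theorem cyclic_triple_cauchy_schwarz (n : ℕ) (a b c : Fin n → Fin n → ℝ) :
    ∑ i : Fin n, ∑ j : Fin n, ∑ k : Fin n, a i j * b j k * c k i ≤
      Real.sqrt ((∑ i : Fin n, ∑ j : Fin n, a i j ^ 2) *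
        (∑ i : Fin n, ∑ j : Fin n, b i j ^ 2) *
        (∑ i : Fin n, ∑ j : Fin n, c i j ^ 2)) := by
  set A := ∑ i : Fin n, ∑ j : Fin n, a i j ^ 2 with hA
  set B := ∑ i : Fin n, ∑ j : Fin n, b i j ^ 2 with hB
  set C := ∑ i : Fin n, ∑ j : Fin n, c i j ^ 2 with hC
  have hAnn : 0 ≤ A := Finset.sum_nonneg fun _ _ => Finset.sum_nonneg fun _ _ => sq_nonneg _
  have hBnn : 0 ≤ B := Finset.sum_nonneg fun _ _ => Finset.sum_nonneg fun _ _ => sq_nonneg _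
  have hCnn : 0 ≤ C := Finset.sum_nonneg fun _ _ => Finset.sum_nonneg fun _ _ => sq_nonneg _
  have h1 : ∑ i : Fin n, ∑ j : Fin n, ∑ k : Fin n, a i j * b j k * c k i
      = ∑ p : Fin n × Fin n, a p.1 p.2 * (∑ k : Fin n, b p.2 k * c k p.1) := by
    rw [Fintype.sum_prod_type]
    simp_rw [Finset.mul_sum, mul_assoc]
  rw [h1]
  have h2 := Real.sum_mul_le_sqrt_mul_sqrt Finset.univ
    (fun p : Fin n × Fin n => a p.1 p.2)
    (fun p : Fin n × Fin n => ∑ k : Fin n, b p.2 k * c k p.1)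
  refine h2.trans ?_
  have hAeq : ∑ p : Fin n × Fin n, a p.1 p.2 ^ 2 = A := by
    rw [hA, Fintype.sum_prod_type]
  rw [hAeq]
  have h3 : ∑ p : Fin n × Fin n, (∑ k : Fin n, b p.2 k * c k p.1) ^ 2 ≤ B * C := by
    have step : ∀ p : Fin n × Fin n, (∑ k : Fin n, b p.2 k * c k p.1) ^ 2 ≤
        (∑ k : Fin n, b p.2 k ^ 2) * (∑ k : Fin n, c k p.1 ^ 2) := fun p =>
      Finset.sum_mul_sq_le_sq_mul_sq _ _ _
    calc ∑ p : Fin n × Fin n, (∑ k : Fin n, b p.2 k * c k p.1) ^ 2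
        ≤ ∑ p : Fin n × Fin n, (∑ k : Fin n, b p.2 k ^ 2) * (∑ k : Fin n, c k p.1 ^ 2) :=
          Finset.sum_le_sum fun p _ => step p
      _ = B * C := by
          rw [Fintype.sum_prod_type]
          simp_rw [← Finset.sum_mul, ← Finset.mul_sum]
          rw [hB, hC]
          congr 1
          exact Finset.sum_comm
  calc Real.sqrt A * Real.sqrt (∑ p : Fin n × Fin n, (∑ k : Fin n, b p.2 k * c k p.1) ^ 2)
      ≤ Real.sqrt A * Real.sqrt (B * C) :=
        mul_le_mul_of_nonneg_left (Real.sqrt_le_sqrt h3) (Real.sqrt_nonneg _)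
    _ = Real.sqrt (A * B * C) := by
        rw [← Real.sqrt_mul hAnn, mul_assoc]
end

section
/- Let P ∈ [0,1]^{n×n} be a symmetric matrix with zero diagonal, and let A be a random symmetric binary matrix whose entries above the diagonal are independent Bernoulli(P_{ij}). Then the expected number of triangles E[Δ(A)] = (1/6)∑_{i,j,k} P_{ij} P_{jk} P_{ki} satisfies E[Δ(A)] ≤ (√2/3) · Ov(A)^{3/2} · Vol(A)^{3/2}, where Vol(A) = ∑_{i<j} P_{ij} and Ov(A) = (∑_{i<j} P_{ij}²)/Vol(A). -/
set_option maxHeartbeats 1000000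

theorem edge_independent_triangle_bound_vol
    (n : ℕ) (P : Fin n → Fin n → ℝ)
    (h0 : ∀ i j, 0 ≤ P i j) (h1 : ∀ i j, P i j ≤ 1)
    (hsym : ∀ i j, P i j = P j i) (hdiag : ∀ i, P i i = 0)
    (Vol Ov : ℝ)
    (hVol : Vol = ∑ i : Fin n, ∑ j : Fin n, if i < j then P i j else 0)
    (hVolpos : 0 < Vol)
    (hOv : Ov = (∑ i : Fin n, ∑ j : Fin n, if i < j then P i j ^ 2 else 0) / Vol) :
    (1 / 6 : ℝ) * ∑ i : Fin n, ∑ j : Fin n, ∑ k : Fin n, P i j * P j k * P k i ≤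
      (Real.sqrt 2 / 3) * Ov ^ ((3 : ℝ) / 2) * Vol ^ ((3 : ℝ) / 2) := by
  set S2 : ℝ := ∑ i : Fin n, ∑ j : Fin n, if i < j then P i j ^ 2 else 0 with hS2def
  set S : ℝ := ∑ i : Fin n, ∑ j : Fin n, P i j ^ 2 with hSdef
  have hS2nn : 0 ≤ S2 := by
    apply Finset.sum_nonneg; intro i _; apply Finset.sum_nonneg; intro j _
    split <;> positivity
  have hSnn : 0 ≤ S := by
    apply Finset.sum_nonneg; intro i _; apply Finset.sum_nonneg; intro j _
    positivity
  -- S = 2 * S2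
  have hS2S : S = 2 * S2 := by
    have key : ∀ i j : Fin n, P i j ^ 2
        = (if i < j then P i j ^ 2 else 0) + (if j < i then P i j ^ 2 else 0) := by
      intro i j
      rcases lt_trichotomy i j with h | h | h
      · rw [if_pos h, if_neg (not_lt_of_gt h)]; ring
      · subst h; simp [hdiag]
      · rw [if_neg (not_lt_of_gt h), if_pos h]; ring
    have hswap : (∑ i : Fin n, ∑ j : Fin n, if j < i then P i j ^ 2 else 0) = S2 := by
      rw [Finset.sum_comm]
      refine Finset.sum_congr rfl fun i _ => Finset.sum_congr rfl fun j _ => ?_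
      rw [hsym]
    calc S = ∑ i : Fin n, ∑ j : Fin n,
        ((if i < j then P i j ^ 2 else 0) + (if j < i then P i j ^ 2 else 0)) := by
          rw [hSdef]
          exact Finset.sum_congr rfl fun i _ => Finset.sum_congr rfl fun j _ => key i j
      _ = S2 + ∑ i : Fin n, ∑ j : Fin n, (if j < i then P i j ^ 2 else 0) := by
          rw [hS2def]; rw [← Finset.sum_add_distrib]
          exact Finset.sum_congr rfl fun i _ => Finset.sum_add_distrib
      _ = 2 * S2 := by rw [hswap]; ring
  set Q : Fin n → Fin n → ℝ := fun i k => ∑ j : Fin n, P i j * P j k with hQdef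
  set T : ℝ := ∑ i : Fin n, ∑ j : Fin n, ∑ k : Fin n, P i j * P j k * P k i with hTdef
  have hTnn : 0 ≤ T := by
    apply Finset.sum_nonneg; intro i _; apply Finset.sum_nonneg; intro j _
    apply Finset.sum_nonneg; intro k _
    have := h0 i j; have := h0 j k; have := h0 k i; positivity
  have hTQ : T = ∑ p ∈ (Finset.univ ×ˢ Finset.univ : Finset (Fin n × Fin n)),
      Q p.1 p.2 * P p.1 p.2 := by
    rw [Finset.sum_product, hTdef]
    refine Finset.sum_congr rfl fun i _ => ?_
    rw [Finset.sum_comm]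
    refine Finset.sum_congr rfl fun k _ => ?_
    rw [hQdef]
    simp only
    rw [Finset.sum_mul]
    exact Finset.sum_congr rfl fun j _ => by rw [hsym k i]
  have hPsum : (∑ p ∈ (Finset.univ ×ˢ Finset.univ : Finset (Fin n × Fin n)),
      P p.1 p.2 ^ 2) = S := by
    rw [Finset.sum_product, hSdef]
  have hQsum : (∑ p ∈ (Finset.univ ×ˢ Finset.univ : Finset (Fin n × Fin n)),
      Q p.1 p.2 ^ 2) ≤ S ^ 2 := by
    rw [Finset.sum_product]
    have hQbd : ∀ i k : Fin n, Q i k ^ 2 ≤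
        (∑ j : Fin n, P i j ^ 2) * (∑ j : Fin n, P j k ^ 2) := fun i k =>
      Finset.sum_mul_sq_le_sq_mul_sq Finset.univ (fun j => P i j) (fun j => P j k)
    calc (∑ i : Fin n, ∑ k : Fin n, Q i k ^ 2)
        ≤ ∑ i : Fin n, ∑ k : Fin n, (∑ j : Fin n, P i j ^ 2) * (∑ j : Fin n, P j k ^ 2) := by
          apply Finset.sum_le_sum; intro i _; apply Finset.sum_le_sum; intro k _
          exact hQbd i k
      _ = (∑ i : Fin n, ∑ j : Fin n, P i j ^ 2) * (∑ k : Fin n, ∑ j : Fin n, P j k ^ 2) := by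
          rw [Finset.sum_mul_sum]
      _ = S * S := by
          rw [← hSdef]
          congr 1
          rw [Finset.sum_comm]
      _ = S ^ 2 := by ring
  -- T ≤ S * sqrt S
  have hT2 : T ^ 2 ≤ S ^ 2 * S := by
    rw [hTQ]
    calc (∑ p ∈ (Finset.univ ×ˢ Finset.univ : Finset (Fin n × Fin n)),
        Q p.1 p.2 * P p.1 p.2) ^ 2
        ≤ (∑ p ∈ (Finset.univ ×ˢ Finset.univ : Finset (Fin n × Fin n)), Q p.1 p.2 ^ 2) *
          (∑ p ∈ (Finset.univ ×ˢ Finset.univ : Finset (Fin n × Fin n)), P p.1 p.2 ^ 2) :=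
          Finset.sum_mul_sq_le_sq_mul_sq _ _ _
      _ ≤ S ^ 2 * S := by rw [hPsum]; exact mul_le_mul_of_nonneg_right hQsum hSnn
  have hTle : T ≤ S * Real.sqrt S := by
    have h1' : T = Real.sqrt (T ^ 2) := (Real.sqrt_sq hTnn).symm
    rw [h1']
    calc Real.sqrt (T ^ 2) ≤ Real.sqrt (S ^ 2 * S) := Real.sqrt_le_sqrt hT2
      _ = S * Real.sqrt S := by
          rw [Real.sqrt_mul (by positivity), Real.sqrt_sq hSnn]
  -- RHS computation
  have hOvnn : 0 ≤ Ov := by rw [hOv]; positivity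
  have hrpow : Ov ^ ((3 : ℝ) / 2) * Vol ^ ((3 : ℝ) / 2) = S2 * Real.sqrt S2 := by
    rw [← Real.mul_rpow hOvnn hVolpos.le]
    have hOV : Ov * Vol = S2 := by
      rw [hOv]; field_simp
    rw [hOV]
    rw [show ((3 : ℝ) / 2) = (1 / 2) * (3 : ℕ) by push_cast; ring,
      Real.rpow_mul hS2nn, Real.rpow_natCast, ← Real.sqrt_eq_rpow]
    rw [pow_succ, Real.sq_sqrt hS2nn]
  rw [mul_assoc, hrpow]
  have hsqrtS : Real.sqrt S = Real.sqrt 2 * Real.sqrt S2 := by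
    rw [hS2S, Real.sqrt_mul (by norm_num)]
  have h2 : (0:ℝ) ≤ Real.sqrt S2 := Real.sqrt_nonneg _
  calc (1 / 6 : ℝ) * T ≤ (1 / 6) * (S * Real.sqrt S) := by linarith
    _ = Real.sqrt 2 / 3 * (S2 * Real.sqrt S2) := by
        rw [hsqrtS, hS2S]; ring
end

section
/- Any edge independent graph model A on n nodes with overlap Ov(A) has expected triangle count at most (n³/6) · Ov(A)³. -/
/-!
Write `T = ∑ P i j * P j k * P k i` and `F = ∑ P i j ^ 2`, so that `F = 2 · Vol · Ov` by symmetry.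
Cauchy–Schwarz, applied to `T = ∑_{i,k} (P²) i k · P k i` and then entrywise to `P²`, gives
`T² ≤ F³`, i.e. `tr P³ ≤ ‖P‖_F³`; applied to `∑ P i j = 2 · Vol` it gives `(2 · Vol)² ≤ n² F`.
Multiplying, `T · Vol³ ≤ n³ (F / 2)³ = n³ (Vol · Ov)³`.
-/

open Finset

section
variable {ι κ μ R : Type*} [Fintype ι] [Fintype κ] [Fintype μ]

lemma sum_sum_eq_two_mul_sum_sum_lt [LinearOrder ι] [NonAssocSemiring R] {f : ι → ι → R}
    (hsym : ∀ i j, f i j = f j i) (hdiag : ∀ i, f i i = 0) :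
    ∑ i, ∑ j, f i j = 2 * ∑ i, ∑ j, if i < j then f i j else 0 := by
  have hsplit : ∀ i j, f i j = (if i < j then f i j else 0) + if j < i then f j i else 0 := by
    intro i j
    rcases lt_trichotomy i j with h | rfl | h
    · simp [h, h.not_gt]
    · simp [hdiag]
    · simp [h, h.not_gt, hsym i j]
  calc ∑ i, ∑ j, f i j
      = ∑ i, ∑ j, ((if i < j then f i j else 0) + if j < i then f j i else 0) :=
        sum_congr rfl fun i _ => sum_congr rfl fun j _ => hsplit i j
    _ = 2 * ∑ i, ∑ j, if i < j then f i j else 0 := by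
        simp only [sum_add_distrib]
        rw [sum_comm (f := fun i j => if j < i then f j i else 0), two_mul]

variable [CommRing R] [LinearOrder R] [IsStrictOrderedRing R]

lemma sq_sum_sum_mul_le (f g : ι → κ → R) :
    (∑ i, ∑ j, f i j * g i j) ^ 2 ≤ (∑ i, ∑ j, f i j ^ 2) * ∑ i, ∑ j, g i j ^ 2 := by
  simpa only [Fintype.sum_prod_type] using
    sum_mul_sq_le_sq_mul_sq univ (fun p : ι × κ => f p.1 p.2) (fun p => g p.1 p.2)

lemma sq_sum_sum_le_card_mul_sum_sum_sq (f : ι → κ → R) :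
    (∑ i, ∑ j, f i j) ^ 2 ≤ (Fintype.card ι * Fintype.card κ) * ∑ i, ∑ j, f i j ^ 2 := by
  simpa [mul_comm] using sq_sum_sum_mul_le f (fun _ _ => 1)

lemma sum_sum_sq_sum_mul_le (A : ι → κ → R) (B : κ → μ → R) :
    ∑ i, ∑ k, (∑ j, A i j * B j k) ^ 2 ≤ (∑ i, ∑ j, A i j ^ 2) * ∑ j, ∑ k, B j k ^ 2 := by
  calc ∑ i, ∑ k, (∑ j, A i j * B j k) ^ 2
      ≤ ∑ i, ∑ k, (∑ j, A i j ^ 2) * ∑ j, B j k ^ 2 :=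
        sum_le_sum fun i _ => sum_le_sum fun k _ => sum_mul_sq_le_sq_mul_sq _ _ _
    _ = (∑ i, ∑ j, A i j ^ 2) * ∑ j, ∑ k, B j k ^ 2 := by
        rw [sum_comm (f := fun j k => B j k ^ 2), sum_mul_sum]

lemma sq_sum_triangle_le (P : ι → ι → R) :
    (∑ i, ∑ j, ∑ k, P i j * P j k * P k i) ^ 2 ≤ (∑ i, ∑ j, P i j ^ 2) ^ 3 := by
  have hpaths : ∑ i, ∑ j, ∑ k, P i j * P j k * P k i =
      ∑ i, ∑ k, (∑ j, P i j * P j k) * P k i := by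
    simp_rw [sum_mul]
    exact sum_congr rfl fun i _ => sum_comm
  have hF : 0 ≤ ∑ i, ∑ j, P i j ^ 2 := by positivity
  calc (∑ i, ∑ j, ∑ k, P i j * P j k * P k i) ^ 2
      = (∑ i, ∑ k, (∑ j, P i j * P j k) * P k i) ^ 2 := by rw [hpaths]
    _ ≤ (∑ i, ∑ k, (∑ j, P i j * P j k) ^ 2) * ∑ i, ∑ k, P k i ^ 2 := sq_sum_sum_mul_le _ _
    _ ≤ ((∑ i, ∑ j, P i j ^ 2) * ∑ i, ∑ j, P i j ^ 2) * ∑ i, ∑ j, P i j ^ 2 := by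
        rw [sum_comm (f := fun i k => P k i ^ 2)]
        gcongr
        exact sum_sum_sq_sum_mul_le P P
    _ = (∑ i, ∑ j, P i j ^ 2) ^ 3 := by ring

lemma triangle_mul_cube_le_card_pow_mul [LinearOrder ι] {P : ι → ι → R}
    (hsym : ∀ i j, P i j = P j i) (hdiag : ∀ i, P i i = 0) :
    (∑ i, ∑ j, ∑ k, P i j * P j k * P k i) * (∑ i, ∑ j, if i < j then P i j else 0) ^ 3 ≤
      (Fintype.card ι : R) ^ 3 * (∑ i, ∑ j, if i < j then P i j ^ 2 else 0) ^ 3 := by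
  set T := ∑ i, ∑ j, ∑ k, P i j * P j k * P k i
  set V := ∑ i, ∑ j, if i < j then P i j else 0
  set S := ∑ i, ∑ j, if i < j then P i j ^ 2 else 0
  set c : R := (Fintype.card ι : R)
  have hsum : ∑ i, ∑ j, P i j = 2 * V := sum_sum_eq_two_mul_sum_sum_lt hsym hdiag
  have hsum_sq : ∑ i, ∑ j, P i j ^ 2 = 2 * S :=
    sum_sum_eq_two_mul_sum_sum_lt (fun i j => by rw [hsym]) (fun i => by simp [hdiag])
  have hS : 0 ≤ S := by
    have : 0 ≤ ∑ i, ∑ j, P i j ^ 2 := by positivity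
    linarith
  have hV : 2 * V ^ 2 ≤ c ^ 2 * S := by
    have := sq_sum_sum_le_card_mul_sum_sum_sq P
    rw [hsum, hsum_sq] at this
    nlinarith
  have hT : T ^ 2 ≤ (2 * S) ^ 3 := hsum_sq ▸ sq_sum_triangle_le P
  have hV6 : 8 * (V ^ 2) ^ 3 ≤ (c ^ 2 * S) ^ 3 := by
    have := pow_le_pow_left₀ (by positivity) hV 3
    linarith [mul_pow (2 : R) (V ^ 2) 3]
  refine le_of_pow_le_pow_left₀ two_ne_zero (by positivity) ?_
  calc (T * V ^ 3) ^ 2 = T ^ 2 * (V ^ 2) ^ 3 := by ring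
    _ ≤ (2 * S) ^ 3 * (V ^ 2) ^ 3 := by gcongr
    _ = S ^ 3 * (8 * (V ^ 2) ^ 3) := by ring
    _ ≤ S ^ 3 * (c ^ 2 * S) ^ 3 := by gcongr
    _ = (c ^ 3 * S ^ 3) ^ 2 := by ring

end

theorem edge_independent_triangle_bound_general
    (n : ℕ) (P : Fin n → Fin n → ℝ)
    (hsym : ∀ i j, P i j = P j i) (hdiag : ∀ i, P i i = 0)
    (Vol Ov : ℝ)
    (hVol : Vol = ∑ i : Fin n, ∑ j : Fin n, if i < j then P i j else 0)
    (hVolpos : 0 < Vol)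
    (hOv : Ov = (∑ i : Fin n, ∑ j : Fin n, if i < j then P i j ^ 2 else 0) / Vol) :
    (1 / 6 : ℝ) * ∑ i : Fin n, ∑ j : Fin n, ∑ k : Fin n, P i j * P j k * P k i ≤
      (n : ℝ) ^ 3 / 6 * Ov ^ 3 := by
  have key := triangle_mul_cube_le_card_pow_mul hsym hdiag
  rw [Fintype.card_fin, ← hVol] at key
  set T := ∑ i : Fin n, ∑ j : Fin n, ∑ k : Fin n, P i j * P j k * P k i
  set S := ∑ i : Fin n, ∑ j : Fin n, if i < j then P i j ^ 2 else 0
  rw [hOv]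
  calc 1 / 6 * T = 1 / 6 * (T * Vol ^ 3) / Vol ^ 3 := by field_simp
    _ ≤ 1 / 6 * ((n : ℝ) ^ 3 * S ^ 3) / Vol ^ 3 := by gcongr
    _ = (n : ℝ) ^ 3 / 6 * (S / Vol) ^ 3 := by ring

theorem edge_independent_triangle_bound
    (n : ℕ) (P : Fin n → Fin n → ℝ)
    (h0 : ∀ i j, 0 ≤ P i j) (h1 : ∀ i j, P i j ≤ 1)
    (hsym : ∀ i j, P i j = P j i) (hdiag : ∀ i, P i i = 0)
    (Vol Ov : ℝ)
    (hVol : Vol = ∑ i : Fin n, ∑ j : Fin n, if i < j then P i j else 0)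
    (hVolpos : 0 < Vol)
    (hOv : Ov = (∑ i : Fin n, ∑ j : Fin n, if i < j then P i j ^ 2 else 0) / Vol) :
    (1 / 6 : ℝ) * ∑ i : Fin n, ∑ j : Fin n, ∑ k : Fin n, P i j * P j k * P k i ≤
      (n : ℝ) ^ 3 / 6 * Ov ^ 3 :=
  edge_independent_triangle_bound_general n P hsym hdiag Vol Ov hVol hVolpos hOv
end

section
/- For any distribution A over symmetric binary adjacency matrices on n nodes without self-loops, the expected number of triangles is at most (1/2) n³ · Ov(A). -/
open MeasureTheory

private lemma integrable_of_binary {Ω : Type*} [MeasurableSpace Ω] (μ : Measure Ω)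
    [IsProbabilityMeasure μ] (f : Ω → ℝ) (hm : Measurable f)
    (hb : ∀ ω, f ω = 0 ∨ f ω = 1) : Integrable f μ := by
  refine (integrable_const (1 : ℝ)).mono' hm.aestronglyMeasurable ?_
  filter_upwards with ω
  rcases hb ω with h | h <;> simp [h]

theorem fully_dependent_triangle_bound
    {Ω : Type*} [MeasurableSpace Ω] (μ : Measure Ω) [IsProbabilityMeasure μ]
    (n : ℕ) (A : Ω → Fin n → Fin n → ℝ)
    (hmeas : ∀ i j, Measurable fun ω => A ω i j)
    (hbin : ∀ ω i j, A ω i j = 0 ∨ A ω i j = 1)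
    (hsym : ∀ ω i j, A ω i j = A ω j i)
    (hdiag : ∀ ω i, A ω i i = 0)
    (Vol Ov : ℝ)
    (hVol : Vol = ∑ i : Fin n, ∑ j : Fin n, if i < j then ∫ ω, A ω i j ∂μ else 0)
    (hVolpos : 0 < Vol)
    (hOv : Ov = (∑ i : Fin n, ∑ j : Fin n,
        if i < j then ∫ q : Ω × Ω, A q.1 i j * A q.2 i j ∂(μ.prod μ) else 0) / Vol) :
    (∫ ω, ∑ i : Fin n, ∑ j : Fin n, ∑ k : Fin n,
        (if i < j ∧ j < k then A ω i j * A ω j k * A ω i k else 0) ∂μ) ≤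
      (1 / 2 : ℝ) * (n : ℝ) ^ 3 * Ov := by
  have h01 : ∀ ω i j, 0 ≤ A ω i j ∧ A ω i j ≤ 1 := by
    intro ω i j; rcases hbin ω i j with h | h <;> simp [h]
  set v : Fin n → Fin n → ℝ := fun i j => ∫ ω, A ω i j ∂μ with hv
  have hv0 : ∀ i j, 0 ≤ v i j := fun i j =>
    integral_nonneg fun ω => (h01 ω i j).1
  have hintA : ∀ i j, Integrable (fun ω => A ω i j) μ := fun i j =>
    integrable_of_binary μ _ (hmeas i j) (fun ω => hbin ω i j)
  have hbin3 : ∀ ω i j k, A ω i j * A ω j k * A ω i k = 0 ∨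
      A ω i j * A ω j k * A ω i k = 1 := by
    intro ω i j k
    rcases hbin ω i j with h | h <;> rcases hbin ω j k with h' | h' <;>
      rcases hbin ω i k with h'' | h'' <;> simp [h, h', h'']
  have hint3 : ∀ i j k, Integrable (fun ω => A ω i j * A ω j k * A ω i k) μ := by
    intro i j k
    exact integrable_of_binary μ _ (((hmeas i j).mul (hmeas j k)).mul (hmeas i k))
      (fun ω => hbin3 ω i j k)
  have hintT : ∀ (i j k : Fin n), Integrable
      (fun ω => if i < j ∧ j < k then A ω i j * A ω j k * A ω i k else 0) μ := by
    intro i j k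
    by_cases h : i < j ∧ j < k <;> simp [h, hint3, integrable_const]
  -- Step 1 : LHS ≤ n * Vol
  have step1 : (∫ ω, ∑ i : Fin n, ∑ j : Fin n, ∑ k : Fin n,
      (if i < j ∧ j < k then A ω i j * A ω j k * A ω i k else 0) ∂μ) ≤ (n : ℝ) * Vol := by
    rw [integral_finset_sum _ (fun i _ => (integrable_finset_sum _
      (fun j _ => integrable_finset_sum _ (fun k _ => hintT i j k))))]
    rw [show (n : ℝ) * Vol = ∑ i : Fin n, ∑ j : Fin n,
        (n : ℝ) * (if i < j then v i j else 0) by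
      rw [hVol, Finset.mul_sum]; congr 1; ext i; rw [Finset.mul_sum]]
    refine Finset.sum_le_sum fun i _ => ?_
    rw [integral_finset_sum _ (fun j _ => integrable_finset_sum _ (fun k _ => hintT i j k))]
    refine Finset.sum_le_sum fun j _ => ?_
    rw [integral_finset_sum _ (fun k _ => hintT i j k)]
    calc ∑ k : Fin n, ∫ ω, (if i < j ∧ j < k then A ω i j * A ω j k * A ω i k else 0) ∂μ
        ≤ ∑ _k : Fin n, (if i < j then v i j else 0) := by
          refine Finset.sum_le_sum fun k _ => ?_
          by_cases h : i < j ∧ j < k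
          · simp only [h.1, h.2, and_self, if_true]
            refine integral_mono (hint3 i j k) (hintA i j) fun ω => ?_
            have h1 := h01 ω i j; have h2 := h01 ω j k; have h3 := h01 ω i k
            calc A ω i j * A ω j k * A ω i k
                ≤ A ω i j * A ω j k := mul_le_of_le_one_right (mul_nonneg h1.1 h2.1) h3.2
              _ ≤ A ω i j := mul_le_of_le_one_right h1.1 h2.2
          · simp only [h, if_false, integral_zero]
            by_cases hij : i < j <;> simp [hij, hv0 i j]
      _ = (n : ℝ) * (if i < j then v i j else 0) := by
          rw [Finset.sum_const, Finset.card_univ, Fintype.card_fin, nsmul_eq_mul]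
  -- Ov rewritten
  have hprod : ∀ i j, (∫ q : Ω × Ω, A q.1 i j * A q.2 i j ∂(μ.prod μ)) = v i j * v i j := by
    intro i j
    exact integral_prod_mul (fun ω => A ω i j) (fun ω => A ω i j)
  set T : ℝ := ∑ i : Fin n, ∑ j : Fin n, (if i < j then v i j * v i j else 0) with hT
  have hOv' : Ov = T / Vol := by
    rw [hOv, hT]; congr 1
    refine Finset.sum_congr rfl fun i _ => Finset.sum_congr rfl fun j _ => ?_
    by_cases h : i < j <;> simp [h, hprod]
  -- Cauchy-Schwarz step
  set S : Finset (Fin n × Fin n) :=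
    (Finset.univ ×ˢ Finset.univ).filter (fun p => p.1 < p.2) with hS
  have hVolS : Vol = ∑ p ∈ S, v p.1 p.2 := by
    rw [hS, Finset.sum_filter, Finset.sum_product, hVol]
  have hTS : T = ∑ p ∈ S, (v p.1 p.2) ^ 2 := by
    rw [hS, Finset.sum_filter, Finset.sum_product, hT]
    refine Finset.sum_congr rfl fun i _ => Finset.sum_congr rfl fun j _ => ?_
    by_cases h : i < j <;> simp [h, sq]
  have hcard : 2 * S.card ≤ n ^ 2 := by
    set S' : Finset (Fin n × Fin n) :=
      (Finset.univ ×ˢ Finset.univ).filter (fun p => p.2 < p.1) with hS'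
    have hcc : S.card = S'.card := by
      refine Finset.card_bij (fun p _ => (p.2, p.1)) ?_ ?_ ?_
      · intro p hp; simp only [hS, hS', Finset.mem_filter] at hp ⊢
        exact ⟨by simp, hp.2⟩
      · intro p hp q hq h
        exact Prod.ext (congrArg Prod.snd h) (congrArg Prod.fst h)
      · intro p hp
        refine ⟨(p.2, p.1), ?_, rfl⟩
        simp only [hS, hS', Finset.mem_filter] at hp ⊢
        exact ⟨by simp, hp.2⟩
    have hdisj : Disjoint S S' := by
      rw [Finset.disjoint_left]
      intro p hp hp'
      simp only [hS, hS', Finset.mem_filter] at hp hp'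
      exact absurd hp'.2 (lt_asymm hp.2)
    have hsub : S ∪ S' ⊆ Finset.univ ×ˢ Finset.univ :=
      Finset.union_subset (Finset.filter_subset _ _) (Finset.filter_subset _ _)
    have := Finset.card_le_card hsub
    rw [Finset.card_union_of_disjoint hdisj] at this
    have hcu : (Finset.univ ×ˢ Finset.univ : Finset (Fin n × Fin n)).card = n ^ 2 := by
      simp [sq]
    rw [hcu] at this
    omega
  have hcauchy : Vol ^ 2 ≤ (S.card : ℝ) * T := by
    rw [hVolS, hTS]; exact sq_sum_le_card_mul_sum_sq
  have hT0 : 0 ≤ T := by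
    rw [hTS]; exact Finset.sum_nonneg fun p _ => sq_nonneg _
  have key : 2 * Vol ^ 2 ≤ (n : ℝ) ^ 2 * T := by
    have h1 : (2 : ℝ) * S.card ≤ (n : ℝ) ^ 2 := by exact_mod_cast hcard
    nlinarith [hcauchy, hT0]
  have hnR : (0 : ℝ) ≤ n := Nat.cast_nonneg n
  refine step1.trans ?_
  rw [hOv']
  have hmain : (n : ℝ) * Vol ≤ (1 / 2 * ((n : ℝ) ^ 3 * T)) / Vol :=
    (le_div_iff₀ hVolpos).mpr (by nlinarith [mul_le_mul_of_nonneg_left key hnR])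
  calc (n : ℝ) * Vol ≤ (1 / 2 * ((n : ℝ) ^ 3 * T)) / Vol := hmain
    _ = 1 / 2 * (n : ℝ) ^ 3 * (T / Vol) := by ring
end

section
/- Let A be a sample from a node independent graph model on n nodes. If for all triples i<j<k, E[A_{ij}A_{jk}A_{ik}] ≤ sqrt(E[A_{ij}]E[A_{jk}]E[A_{ik}]), then the expected number of triangles satisfies E[Δ(A)] ≤ (1/6) n³ · Ov(A)^{3/2}. -/
open MeasureTheory

private lemma amgm3 (x y z : ℝ) (hx : 0 ≤ x) (hy : 0 ≤ y) (hz : 0 ≤ z) :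
    x * y * z ≤ (x ^ 3 + y ^ 3 + z ^ 3) / 3 := by
  nlinarith [mul_nonneg (add_nonneg (add_nonneg hx hy) hz) (sq_nonneg (x - y)),
    mul_nonneg (add_nonneg (add_nonneg hx hy) hz) (sq_nonneg (y - z)),
    mul_nonneg (add_nonneg (add_nonneg hx hy) hz) (sq_nonneg (x - z))]

private lemma ite_integrable {Ω : Type*} [MeasurableSpace Ω] {μ : Measure Ω}
    (c : Prop) [Decidable c] {f : Ω → ℝ} (hf : Integrable f μ) :
    Integrable (fun ω => if c then f ω else 0) μ := by
  by_cases h : c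
  · simpa [h] using hf
  · simp [h]

private lemma card3 {n : ℕ} (a b : Fin n) :
    (Finset.univ.filter fun x : Fin n => a < b ∧ b < x).card
    + (Finset.univ.filter fun x : Fin n => x < a ∧ a < b).card
    + (Finset.univ.filter fun x : Fin n => a < x ∧ x < b).card ≤ n := by
  classical
  set s1 := Finset.univ.filter fun x : Fin n => a < b ∧ b < x with hs1
  set s2 := Finset.univ.filter fun x : Fin n => x < a ∧ a < b with hs2
  set s3 := Finset.univ.filter fun x : Fin n => a < x ∧ x < b with hs3
  have d12 : Disjoint s1 s2 := by
    rw [Finset.disjoint_left]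
    intro x hx hx'
    simp only [hs1, hs2, Finset.mem_filter] at hx hx'
    exact absurd (lt_trans (lt_trans hx.2.2 hx'.2.1) hx'.2.2) (lt_irrefl _)
  have d13 : Disjoint s1 s3 := by
    rw [Finset.disjoint_left]
    intro x hx hx'
    simp only [hs1, hs3, Finset.mem_filter] at hx hx'
    exact absurd (lt_trans hx.2.2 hx'.2.2) (lt_irrefl _)
  have d23 : Disjoint s2 s3 := by
    rw [Finset.disjoint_left]
    intro x hx hx'
    simp only [hs2, hs3, Finset.mem_filter] at hx hx'
    exact absurd (lt_trans hx.2.1 hx'.2.1) (lt_irrefl _)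
  calc s1.card + s2.card + s3.card = ((s1 ∪ s2) ∪ s3).card := by
        rw [Finset.card_union_of_disjoint, Finset.card_union_of_disjoint d12]
        rw [Finset.disjoint_union_left]; exact ⟨d13, d23⟩
    _ ≤ (Finset.univ : Finset (Fin n)).card := Finset.card_le_card (Finset.subset_univ _)
    _ = n := by simp

private lemma double_count {n : ℕ} :
    (∑ i : Fin n, ∑ j : Fin n, (if i < j then (1 : ℝ) else 0)) ≤ (n : ℝ) ^ 2 / 2 := by
  have key : (∑ i : Fin n, ∑ j : Fin n, (if i < j then (1 : ℝ) else 0))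
      + (∑ i : Fin n, ∑ j : Fin n, (if i < j then (1 : ℝ) else 0)) ≤ (n : ℝ) ^ 2 := by
    have hswap : (∑ i : Fin n, ∑ j : Fin n, (if j < i then (1 : ℝ) else 0))
        = ∑ i : Fin n, ∑ j : Fin n, (if i < j then (1 : ℝ) else 0) := Finset.sum_comm
    nth_rewrite 2 [← hswap]
    rw [← Finset.sum_add_distrib]
    calc ∑ i : Fin n, ((∑ j : Fin n, (if i < j then (1 : ℝ) else 0))
            + (∑ j : Fin n, (if j < i then (1 : ℝ) else 0)))
        = ∑ i : Fin n, ∑ j : Fin n,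
            ((if i < j then (1 : ℝ) else 0) + (if j < i then (1 : ℝ) else 0)) :=
          Finset.sum_congr rfl fun i _ => Finset.sum_add_distrib.symm
      _ ≤ ∑ _i : Fin n, ∑ _j : Fin n, (1 : ℝ) := by
          refine Finset.sum_le_sum fun i _ => Finset.sum_le_sum fun j _ => ?_
          by_cases h1 : i < j
          · have h2 : ¬ j < i := asymm h1
            norm_num [h1, h2]
          · by_cases h2 : j < i <;> norm_num [h1, h2]
      _ = (n : ℝ) ^ 2 := by simp [Finset.sum_const, Finset.card_univ]; ring
  linarith

set_option maxHeartbeats 1000000 in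
theorem node_independent_triangle_bound
    {Ω : Type*} [MeasurableSpace Ω] (μ : Measure Ω) [IsProbabilityMeasure μ]
    (n : ℕ) (A : Ω → Fin n → Fin n → ℝ)
    (hmeas : ∀ i j, Measurable fun ω => A ω i j)
    (hbin : ∀ ω i j, A ω i j = 0 ∨ A ω i j = 1)
    (hsym : ∀ ω i j, A ω i j = A ω j i)
    (hdiag : ∀ ω i, A ω i i = 0)
    (htri : ∀ i j k : Fin n, i < j → j < k →
      (∫ ω, A ω i j * A ω j k * A ω i k ∂μ) ≤
        Real.sqrt ((∫ ω, A ω i j ∂μ) * (∫ ω, A ω j k ∂μ) * (∫ ω, A ω i k ∂μ)))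
    (Vol Ov : ℝ)
    (hVol : Vol = ∑ i : Fin n, ∑ j : Fin n, if i < j then ∫ ω, A ω i j ∂μ else 0)
    (hVolpos : 0 < Vol)
    (hOv : Ov = (∑ i : Fin n, ∑ j : Fin n,
        if i < j then ∫ q : Ω × Ω, A q.1 i j * A q.2 i j ∂(μ.prod μ) else 0) / Vol) :
    (∫ ω, ∑ i : Fin n, ∑ j : Fin n, ∑ k : Fin n,
        (if i < j ∧ j < k then A ω i j * A ω j k * A ω i k else 0) ∂μ) ≤
      (1 / 6 : ℝ) * (n : ℝ) ^ 3 * Ov ^ ((3 : ℝ) / 2) := by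
  classical
  have hA0 : ∀ ω i j, 0 ≤ A ω i j := fun ω i j => by rcases hbin ω i j with h | h <;> simp [h]
  have hA1 : ∀ ω i j, A ω i j ≤ 1 := fun ω i j => by rcases hbin ω i j with h | h <;> simp [h]
  have hint1 : ∀ i j, Integrable (fun ω => A ω i j) μ := fun i j =>
    (integrable_const 1).mono' (hmeas i j).aestronglyMeasurable
      (ae_of_all _ fun ω => by
        rw [Real.norm_eq_abs, abs_of_nonneg (hA0 ω i j)]; exact hA1 ω i j)
  have hint3 : ∀ i j k, Integrable (fun ω => A ω i j * A ω j k * A ω i k) μ := fun i j k =>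
    (integrable_const 1).mono' (((hmeas i j).mul (hmeas j k)).mul (hmeas i k)).aestronglyMeasurable
      (ae_of_all _ fun ω => by
        have h0 : 0 ≤ A ω i j * A ω j k * A ω i k :=
          mul_nonneg (mul_nonneg (hA0 ω i j) (hA0 ω j k)) (hA0 ω i k)
        rw [Real.norm_eq_abs, abs_of_nonneg h0]
        exact mul_le_one₀ (mul_le_one₀ (hA1 ω i j) (hA0 ω j k) (hA1 ω j k))
          (hA0 ω i k) (hA1 ω i k))
  set P : Fin n → Fin n → ℝ := fun i j => ∫ ω, A ω i j ∂μ with hPdef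
  have hP0 : ∀ i j, 0 ≤ P i j := fun i j => integral_nonneg fun ω => hA0 ω i j
  set Q : Fin n → Fin n → ℝ := fun i j => Real.sqrt (P i j) with hQdef
  have hQ0 : ∀ i j, 0 ≤ Q i j := fun i j => Real.sqrt_nonneg _
  have hQsq : ∀ i j, Q i j ^ 2 = P i j := fun i j => Real.sq_sqrt (hP0 i j)
  -- step 1: swap integral and sums
  have hswap : (∫ ω, ∑ i : Fin n, ∑ j : Fin n, ∑ k : Fin n,
        (if i < j ∧ j < k then A ω i j * A ω j k * A ω i k else 0) ∂μ)
      = ∑ i : Fin n, ∑ j : Fin n, ∑ k : Fin n,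
        (if i < j ∧ j < k then ∫ ω, A ω i j * A ω j k * A ω i k ∂μ else 0) := by
    rw [integral_finset_sum _ fun i _ => integrable_finset_sum _ fun j _ =>
      integrable_finset_sum _ fun k _ => ite_integrable _ (hint3 i j k)]
    refine Finset.sum_congr rfl fun i _ => ?_
    rw [integral_finset_sum _ fun j _ => integrable_finset_sum _ fun k _ =>
      ite_integrable _ (hint3 i j k)]
    refine Finset.sum_congr rfl fun j _ => ?_
    rw [integral_finset_sum _ fun k _ => ite_integrable _ (hint3 i j k)]
    refine Finset.sum_congr rfl fun k _ => ?_
    by_cases h : i < j ∧ j < k <;> simp [h]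
  -- step 2: bound each triple by product of Q's
  have hstep2 : (∑ i : Fin n, ∑ j : Fin n, ∑ k : Fin n,
        (if i < j ∧ j < k then ∫ ω, A ω i j * A ω j k * A ω i k ∂μ else 0))
      ≤ ∑ i : Fin n, ∑ j : Fin n, ∑ k : Fin n,
        (if i < j ∧ j < k then Q i j * Q j k * Q i k else 0) := by
    refine Finset.sum_le_sum fun i _ => Finset.sum_le_sum fun j _ =>
      Finset.sum_le_sum fun k _ => ?_
    by_cases h : i < j ∧ j < k
    · simp only [if_pos h]
      have h1 := htri i j k h.1 h.2
      have h2 : Real.sqrt (P i j * P j k * P i k) = Q i j * Q j k * Q i k := by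
        rw [hQdef]
        rw [Real.sqrt_mul (mul_nonneg (hP0 i j) (hP0 j k)), Real.sqrt_mul (hP0 i j)]
      calc (∫ ω, A ω i j * A ω j k * A ω i k ∂μ)
          ≤ Real.sqrt (P i j * P j k * P i k) := h1
        _ = Q i j * Q j k * Q i k := h2
    · simp [h]
  -- step 3: AM-GM
  have hstep3 : (∑ i : Fin n, ∑ j : Fin n, ∑ k : Fin n,
        (if i < j ∧ j < k then Q i j * Q j k * Q i k else 0))
      ≤ (1 / 3) * ∑ i : Fin n, ∑ j : Fin n, ∑ k : Fin n,
        (if i < j ∧ j < k then Q i j ^ 3 + Q j k ^ 3 + Q i k ^ 3 else 0) := by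
    rw [Finset.mul_sum]
    refine Finset.sum_le_sum fun i _ => ?_
    rw [Finset.mul_sum]
    refine Finset.sum_le_sum fun j _ => ?_
    rw [Finset.mul_sum]
    refine Finset.sum_le_sum fun k _ => ?_
    by_cases h : i < j ∧ j < k
    · simp only [if_pos h]
      have := amgm3 (Q i j) (Q j k) (Q i k) (hQ0 i j) (hQ0 j k) (hQ0 i k)
      linarith
    · simp [h]
  -- T : sum of cubes over pairs
  set T : ℝ := ∑ i : Fin n, ∑ j : Fin n, (if i < j then Q i j ^ 3 else 0) with hTdef
  have hT0 : 0 ≤ T := by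
    refine Finset.sum_nonneg fun i _ => Finset.sum_nonneg fun j _ => ?_
    by_cases h : i < j <;> simp [h, pow_nonneg (hQ0 i j)]
  -- split the triple sum into three
  have hsplit : (∑ i : Fin n, ∑ j : Fin n, ∑ k : Fin n,
        (if i < j ∧ j < k then Q i j ^ 3 + Q j k ^ 3 + Q i k ^ 3 else 0))
      = (∑ i : Fin n, ∑ j : Fin n, ∑ k : Fin n, (if i < j ∧ j < k then Q i j ^ 3 else 0))
      + (∑ i : Fin n, ∑ j : Fin n, ∑ k : Fin n, (if i < j ∧ j < k then Q j k ^ 3 else 0))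
      + (∑ i : Fin n, ∑ j : Fin n, ∑ k : Fin n, (if i < j ∧ j < k then Q i k ^ 3 else 0)) := by
    rw [← Finset.sum_add_distrib, ← Finset.sum_add_distrib]
    refine Finset.sum_congr rfl fun i _ => ?_
    rw [← Finset.sum_add_distrib, ← Finset.sum_add_distrib]
    refine Finset.sum_congr rfl fun j _ => ?_
    rw [← Finset.sum_add_distrib, ← Finset.sum_add_distrib]
    refine Finset.sum_congr rfl fun k _ => ?_
    by_cases h : i < j ∧ j < k <;> simp [h]
  have hS1 : (∑ i : Fin n, ∑ j : Fin n, ∑ k : Fin n, (if i < j ∧ j < k then Q i j ^ 3 else 0))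
      = ∑ a : Fin n, ∑ b : Fin n,
        ((Finset.univ.filter fun x : Fin n => a < b ∧ b < x).card : ℝ) * Q a b ^ 3 := by
    refine Finset.sum_congr rfl fun a _ => Finset.sum_congr rfl fun b _ => ?_
    rw [← Finset.sum_filter, Finset.sum_const, nsmul_eq_mul]
  have hS2 : (∑ i : Fin n, ∑ j : Fin n, ∑ k : Fin n, (if i < j ∧ j < k then Q j k ^ 3 else 0))
      = ∑ a : Fin n, ∑ b : Fin n,
        ((Finset.univ.filter fun x : Fin n => x < a ∧ a < b).card : ℝ) * Q a b ^ 3 := by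
    rw [Finset.sum_comm]
    refine Finset.sum_congr rfl fun a _ => ?_
    rw [Finset.sum_comm]
    refine Finset.sum_congr rfl fun b _ => ?_
    rw [← Finset.sum_filter, Finset.sum_const, nsmul_eq_mul]
  have hS3 : (∑ i : Fin n, ∑ j : Fin n, ∑ k : Fin n, (if i < j ∧ j < k then Q i k ^ 3 else 0))
      = ∑ a : Fin n, ∑ b : Fin n,
        ((Finset.univ.filter fun x : Fin n => a < x ∧ x < b).card : ℝ) * Q a b ^ 3 := by
    refine Finset.sum_congr rfl fun a _ => ?_
    rw [Finset.sum_comm]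
    refine Finset.sum_congr rfl fun b _ => ?_
    rw [← Finset.sum_filter, Finset.sum_const, nsmul_eq_mul]
  have hnT : (n : ℝ) * T = ∑ a : Fin n, ∑ b : Fin n,
      (if a < b then (n : ℝ) * Q a b ^ 3 else 0) := by
    rw [hTdef, Finset.mul_sum]
    refine Finset.sum_congr rfl fun a _ => ?_
    rw [Finset.mul_sum]
    refine Finset.sum_congr rfl fun b _ => ?_
    by_cases h : a < b <;> simp [h]
  have hScount : (∑ i : Fin n, ∑ j : Fin n, ∑ k : Fin n,
        (if i < j ∧ j < k then Q i j ^ 3 + Q j k ^ 3 + Q i k ^ 3 else 0)) ≤ (n : ℝ) * T := by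
    rw [hsplit, hS1, hS2, hS3, hnT, ← Finset.sum_add_distrib, ← Finset.sum_add_distrib]
    refine Finset.sum_le_sum fun a _ => ?_
    rw [← Finset.sum_add_distrib, ← Finset.sum_add_distrib]
    refine Finset.sum_le_sum fun b _ => ?_
    have hq : (0 : ℝ) ≤ Q a b ^ 3 := pow_nonneg (hQ0 a b) 3
    by_cases h : a < b
    · rw [if_pos h]
      have hc := card3 a b
      have hc' : (((Finset.univ.filter fun x : Fin n => a < b ∧ b < x).card : ℝ)
          + ((Finset.univ.filter fun x : Fin n => x < a ∧ a < b).card : ℝ)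
          + ((Finset.univ.filter fun x : Fin n => a < x ∧ x < b).card : ℝ)) ≤ (n : ℝ) := by
        exact_mod_cast hc
      nlinarith [mul_le_mul_of_nonneg_right hc' hq]
    · have e1 : (Finset.univ.filter fun x : Fin n => a < b ∧ b < x) = ∅ :=
        Finset.filter_eq_empty_iff.mpr fun x _ hh => h hh.1
      have e2 : (Finset.univ.filter fun x : Fin n => x < a ∧ a < b) = ∅ :=
        Finset.filter_eq_empty_iff.mpr fun x _ hh => h hh.2
      have e3 : (Finset.univ.filter fun x : Fin n => a < x ∧ x < b) = ∅ :=
        Finset.filter_eq_empty_iff.mpr fun x _ hh => h (lt_trans hh.1 hh.2)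
      rw [if_neg h, e1, e2, e3]
      simp
  -- second moment sum
  set S2v : ℝ := ∑ i : Fin n, ∑ j : Fin n, (if i < j then P i j ^ 2 else 0) with hS2vdef
  have hS2v0 : 0 ≤ S2v := by
    refine Finset.sum_nonneg fun i _ => Finset.sum_nonneg fun j _ => ?_
    by_cases h : i < j <;> simp [h, sq_nonneg]
  have hpair : ∀ i j : Fin n,
      (∫ q : Ω × Ω, A q.1 i j * A q.2 i j ∂(μ.prod μ)) = P i j ^ 2 := fun i j => by
    simpa [sq, hPdef] using
      integral_prod_mul (μ := μ) (ν := μ) (f := fun ω => A ω i j) (g := fun ω => A ω i j)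
  have hOvS2 : S2v = Ov * Vol := by
    have h1 : Ov = S2v / Vol := by
      rw [hOv]
      congr 1
      refine Finset.sum_congr rfl fun i _ => Finset.sum_congr rfl fun j _ => ?_
      by_cases h : i < j <;> simp [h, hpair i j]
    rw [h1, div_mul_cancel₀ _ hVolpos.ne']
  have hOv0 : 0 ≤ Ov := by nlinarith [hS2v0, hVolpos, hOvS2]
  -- Cauchy-Schwarz: T ≤ Vol * sqrt Ov
  have hCS1 : T ^ 2 ≤ Vol * S2v := by
    have hcs := Finset.sum_mul_sq_le_sq_mul_sq Finset.univ
      (fun p : Fin n × Fin n => if p.1 < p.2 then Q p.1 p.2 else 0)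
      (fun p : Fin n × Fin n => if p.1 < p.2 then P p.1 p.2 else 0)
    rw [Fintype.sum_prod_type, Fintype.sum_prod_type, Fintype.sum_prod_type] at hcs
    have e1 : ∀ i j : Fin n, (if i < j then Q i j else 0) * (if i < j then P i j else 0)
        = (if i < j then Q i j ^ 3 else 0) := fun i j => by
      by_cases h : i < j
      · have : Q i j ^ 3 = Q i j * P i j := by rw [← hQsq i j]; ring
        simp [h, this]
      · simp [h]
    have e2 : ∀ i j : Fin n, (if i < j then Q i j else 0) ^ 2
        = (if i < j then P i j else 0) := fun i j => by
      by_cases h : i < j <;> simp [h, hQsq i j]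
    have e3 : ∀ i j : Fin n, (if i < j then P i j else 0) ^ 2
        = (if i < j then P i j ^ 2 else 0) := fun i j => by
      by_cases h : i < j <;> simp [h]
    simp only [e1, e2, e3] at hcs
    rw [← hTdef, ← hVol, ← hS2vdef] at hcs
    exact hcs
  have hT_le : T ≤ Vol * Real.sqrt Ov := by
    have h1 : T ^ 2 ≤ Vol ^ 2 * Ov := by nlinarith [hCS1, hOvS2]
    calc T = Real.sqrt (T ^ 2) := (Real.sqrt_sq hT0).symm
      _ ≤ Real.sqrt (Vol ^ 2 * Ov) := Real.sqrt_le_sqrt h1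
      _ = Vol * Real.sqrt Ov := by
          rw [Real.sqrt_mul (sq_nonneg Vol), Real.sqrt_sq hVolpos.le]
  -- Vol ≤ n^2/2 * Ov
  have hVol_le : Vol ≤ (n : ℝ) ^ 2 / 2 * Ov := by
    have hcs := Finset.sum_mul_sq_le_sq_mul_sq Finset.univ
      (fun p : Fin n × Fin n => if p.1 < p.2 then P p.1 p.2 else 0)
      (fun p : Fin n × Fin n => if p.1 < p.2 then (1 : ℝ) else 0)
    rw [Fintype.sum_prod_type, Fintype.sum_prod_type, Fintype.sum_prod_type] at hcs
    have e1 : ∀ i j : Fin n, (if i < j then P i j else 0) * (if i < j then (1 : ℝ) else 0)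
        = (if i < j then P i j else 0) := fun i j => by
      by_cases h : i < j <;> simp [h]
    have e2 : ∀ i j : Fin n, (if i < j then P i j else 0) ^ 2
        = (if i < j then P i j ^ 2 else 0) := fun i j => by
      by_cases h : i < j <;> simp [h]
    have e3 : ∀ i j : Fin n, (if i < j then (1 : ℝ) else 0) ^ 2
        = (if i < j then (1 : ℝ) else 0) := fun i j => by
      by_cases h : i < j <;> simp [h]
    simp only [e1, e2, e3] at hcs
    rw [← hVol, ← hS2vdef] at hcs
    -- hcs : Vol ^ 2 ≤ S2v * (∑∑ ite 1)
    have hW2 : (∑ i : Fin n, ∑ j : Fin n, (if i < j then (1 : ℝ) else 0)) ≤ (n : ℝ) ^ 2 / 2 :=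
      double_count
    nlinarith [hcs, hS2v0, hVolpos, hOvS2, mul_le_mul_of_nonneg_left hW2 hS2v0]
  have hOvpow : Ov ^ ((3 : ℝ) / 2) = Ov * Real.sqrt Ov := by
    rw [show ((3 : ℝ) / 2) = (1 / 2) * ((3 : ℕ) : ℝ) by norm_num]
    rw [Real.rpow_mul hOv0, Real.rpow_natCast, ← Real.sqrt_eq_rpow]
    rw [pow_succ, Real.sq_sqrt hOv0]
  have hsqrt0 : 0 ≤ Real.sqrt Ov := Real.sqrt_nonneg Ov
  have hn0 : (0 : ℝ) ≤ (n : ℝ) := Nat.cast_nonneg n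
  calc (∫ ω, ∑ i : Fin n, ∑ j : Fin n, ∑ k : Fin n,
        (if i < j ∧ j < k then A ω i j * A ω j k * A ω i k else 0) ∂μ)
      = ∑ i : Fin n, ∑ j : Fin n, ∑ k : Fin n,
        (if i < j ∧ j < k then ∫ ω, A ω i j * A ω j k * A ω i k ∂μ else 0) := hswap
    _ ≤ ∑ i : Fin n, ∑ j : Fin n, ∑ k : Fin n,
        (if i < j ∧ j < k then Q i j * Q j k * Q i k else 0) := hstep2
    _ ≤ (1 / 3) * ∑ i : Fin n, ∑ j : Fin n, ∑ k : Fin n,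
        (if i < j ∧ j < k then Q i j ^ 3 + Q j k ^ 3 + Q i k ^ 3 else 0) := hstep3
    _ ≤ (1 / 3) * ((n : ℝ) * T) := by
        have := hScount
        linarith
    _ ≤ (1 / 3) * ((n : ℝ) * (Vol * Real.sqrt Ov)) := by
        have h := mul_le_mul_of_nonneg_left hT_le hn0
        linarith
    _ ≤ (1 / 3) * ((n : ℝ) * (((n : ℝ) ^ 2 / 2 * Ov) * Real.sqrt Ov)) := by
        have h1 := mul_le_mul_of_nonneg_right hVol_le hsqrt0
        have h2 := mul_le_mul_of_nonneg_left h1 hn0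
        linarith
    _ = (1 / 6 : ℝ) * (n : ℝ) ^ 3 * Ov ^ ((3 : ℝ) / 2) := by
        rw [hOvpow]; ring
end

section
/- Consider the model that outputs the complete graph on n nodes with probability p and the empty graph with probability 1−p (0 < p ≤ 1). Its overlap equals p and its expected triangle count equals C(n,3)·p; hence the fully dependent triangle bound (1/2)n³·Ov is tight up to constant factors. -/
/-! Off the diagonal every entry `A ω i j` is the indicator of `s`, so each edge has mean `p`,
two independent samples share it with probability `p ^ 2`, and every triple `i < j < k` is a
triangle exactly on `s`. The pairs and triples of `Fin n` are counted by the hockey-stick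
identity. -/

open Finset MeasureTheory

theorem Nat.sum_range_choose_eq_choose_succ (n k : ℕ) :
    ∑ m ∈ range n, m.choose k = n.choose (k + 1) := by
  induction n with
  | zero => simp
  | succ n ih => rw [sum_range_succ, ih, Nat.choose_succ_succ', add_comm]

namespace Fin

variable {n : ℕ} {M : Type*} [AddCommMonoid M]

theorem sum_Iio_choose (j : Fin n) (k : ℕ) :
    ∑ i ∈ Iio j, (i : ℕ).choose k = (j : ℕ).choose (k + 1) := by
  rw [← Nat.sum_range_choose_eq_choose_succ, ← Nat.Iio_eq_range, ← map_valEmbedding_Iio,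
    sum_map]
  rfl

theorem sum_univ_choose (n k : ℕ) : ∑ i : Fin n, (i : ℕ).choose k = n.choose (k + 1) := by
  rw [sum_univ_eq_sum_range (·.choose k), Nat.sum_range_choose_eq_choose_succ]

theorem sum_ite_lt_choose_smul (j : Fin n) (k : ℕ) (c : M) :
    ∑ i : Fin n, (if i < j then (i : ℕ).choose k • c else 0) = (j : ℕ).choose (k + 1) • c := by
  rw [← sum_filter, filter_gt_eq_Iio, ← sum_smul, sum_Iio_choose]

theorem sum_univ_choose_smul (k : ℕ) (c : M) :
    ∑ i : Fin n, (i : ℕ).choose k • c = n.choose (k + 1) • c := by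
  rw [← sum_smul, sum_univ_choose]

theorem sum_sum_ite_lt_of_eq (f : Fin n → Fin n → M) (c : M)
    (hf : ∀ i j, i < j → f i j = c) :
    ∑ i, ∑ j, (if i < j then f i j else 0) = n.choose 2 • c := by
  calc ∑ i, ∑ j, (if i < j then f i j else 0)
      = ∑ j : Fin n, ∑ i, (if i < j then (i : ℕ).choose 0 • c else 0) := by
        rw [sum_comm]
        refine sum_congr rfl fun j _ => sum_congr rfl fun i _ => ?_
        by_cases hij : i < j <;> simp [hij, hf i j]
    _ = n.choose 2 • c := by simp only [sum_ite_lt_choose_smul, sum_univ_choose_smul]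

theorem sum_sum_sum_ite_lt_lt_of_eq (f : Fin n → Fin n → Fin n → M) (c : M)
    (hf : ∀ i j k, i < j → j < k → f i j k = c) :
    ∑ i, ∑ j, ∑ k, (if i < j ∧ j < k then f i j k else 0) = n.choose 3 • c := by
  calc ∑ i, ∑ j, ∑ k, (if i < j ∧ j < k then f i j k else 0)
      = ∑ k : Fin n, ∑ j, ∑ i, (if i < j ∧ j < k then f i j k else 0) :=
        (sum_congr rfl fun _ _ => sum_comm).trans <| sum_comm.trans <| sum_congr rfl fun _ _ =>
          sum_comm
    _ = ∑ k : Fin n, ∑ j, (if j < k then (j : ℕ).choose 1 • c else 0) := by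
        refine sum_congr rfl fun k _ => sum_congr rfl fun j _ => ?_
        split_ifs with hjk
        · rw [← sum_ite_lt_choose_smul]
          refine sum_congr rfl fun i _ => ?_
          by_cases hij : i < j <;> simp [hij, hjk, hf i j k]
        · exact sum_eq_zero fun i _ => if_neg fun h => hjk h.2
    _ = n.choose 3 • c := by simp only [sum_ite_lt_choose_smul, sum_univ_choose_smul]

end Fin

theorem MeasureTheory.integral_indicator_one_of_measure_eq {Ω : Type*} [MeasurableSpace Ω]
    {μ : Measure Ω} {s : Set Ω} (hs : MeasurableSet s) {p : ℝ} (hp : 0 ≤ p)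
    (hμs : μ s = ENNReal.ofReal p) : ∫ ω, s.indicator 1 ω ∂μ = p := by
  rw [integral_indicator_one hs, measureReal_def, hμs, ENNReal.toReal_ofReal hp]

open MeasureTheory Classical in

theorem complete_or_empty_overlap_and_triangles_general
    {Ω : Type*} [MeasurableSpace Ω] (μ : Measure Ω) [IsProbabilityMeasure μ]
    (n : ℕ) (hn : 2 ≤ n) (p : ℝ) (hp : 0 < p)
    (s : Set Ω) (hs : MeasurableSet s) (hμs : μ s = ENNReal.ofReal p)
    (A : Ω → Fin n → Fin n → ℝ)
    (hA : ∀ ω i j, A ω i j = if i ≠ j ∧ ω ∈ s then 1 else 0) :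
    (∑ i : Fin n, ∑ j : Fin n,
          if i < j then ∫ q : Ω × Ω, A q.1 i j * A q.2 i j ∂(μ.prod μ) else 0) /
        (∑ i : Fin n, ∑ j : Fin n, if i < j then ∫ ω, A ω i j ∂μ else 0) = p ∧
    (∫ ω, ∑ i : Fin n, ∑ j : Fin n, ∑ k : Fin n,
        (if i < j ∧ j < k then A ω i j * A ω j k * A ω i k else 0) ∂μ) =
      (n.choose 3 : ℝ) * p := by
  set χ : Ω → ℝ := s.indicator 1
  have hAχ : ∀ ω i j, i ≠ j → A ω i j = χ ω := by
    intro ω i j hij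
    simp [hA, hij, χ, Set.indicator_apply]
  have hχ : ∫ ω, χ ω ∂μ = p := integral_indicator_one_of_measure_eq hs hp.le hμs
  have hedge : ∀ i j, i < j → ∫ ω, A ω i j ∂μ = p := fun i j hij => by
    simp_rw [hAχ _ _ _ hij.ne, hχ]
  have hshared : ∀ i j, i < j → ∫ q : Ω × Ω, A q.1 i j * A q.2 i j ∂(μ.prod μ) = p * p :=
    fun i j hij => by simp_rw [hAχ _ _ _ hij.ne, integral_prod_mul χ χ, hχ]
  have htriangles : ∀ ω, ∑ i : Fin n, ∑ j : Fin n, ∑ k : Fin n,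
      (if i < j ∧ j < k then A ω i j * A ω j k * A ω i k else 0) = n.choose 3 • χ ω :=
    fun ω => Fin.sum_sum_sum_ite_lt_lt_of_eq _ _ fun i j k hij hjk => by
      rw [hAχ _ _ _ hij.ne, hAχ _ _ _ hjk.ne, hAχ _ _ _ (hij.trans hjk).ne]
      by_cases hω : ω ∈ s <;> simp [χ, hω]
  have hpairs : (n.choose 2 : ℝ) ≠ 0 := by exact_mod_cast (Nat.choose_pos hn).ne'
  constructor
  · rw [Fin.sum_sum_ite_lt_of_eq _ _ hshared, Fin.sum_sum_ite_lt_of_eq _ _ hedge, nsmul_eq_mul,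
      nsmul_eq_mul]
    field_simp
  · simp_rw [htriangles, nsmul_eq_mul, integral_const_mul, hχ]

open MeasureTheory Classical in
theorem complete_or_empty_overlap_and_triangles
    {Ω : Type*} [MeasurableSpace Ω] (μ : Measure Ω) [IsProbabilityMeasure μ]
    (n : ℕ) (hn : 2 ≤ n) (p : ℝ) (hp : 0 < p) (hp1 : p ≤ 1)
    (s : Set Ω) (hs : MeasurableSet s) (hμs : μ s = ENNReal.ofReal p)
    (A : Ω → Fin n → Fin n → ℝ)
    (hA : ∀ ω i j, A ω i j = if i ≠ j ∧ ω ∈ s then 1 else 0) :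
    (∑ i : Fin n, ∑ j : Fin n,
          if i < j then ∫ q : Ω × Ω, A q.1 i j * A q.2 i j ∂(μ.prod μ) else 0) /
        (∑ i : Fin n, ∑ j : Fin n, if i < j then ∫ ω, A ω i j ∂μ else 0) = p ∧
    (∫ ω, ∑ i : Fin n, ∑ j : Fin n, ∑ k : Fin n,
        (if i < j ∧ j < k then A ω i j * A ω j k * A ω i k else 0) ∂μ) =
      (n.choose 3 : ℝ) * p :=
  complete_or_empty_overlap_and_triangles_general μ n hn p hp s hs hμs A hA
end

section
/- Let X, Y, Z be probability spaces and f : X×Y → ℝ, g : Y×Z → ℝ, h : Z×X → ℝ be square-integrable functions with respect to the relevant product measures. Then ∫∫∫ f(x,y)g(y,z)h(z,x) dx dy dz ≤ sqrt( ∫∫ f² dx dy · ∫∫ g² dy dz · ∫∫ h² dz dx ). -/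
/-!
Put `K (y, x) = ∫ g (y, z) * h (z, x) dz`, the kernel of the composite of the integral operators
with kernels `g` and `h`. Cauchy–Schwarz in `z` gives `K (y, x)² ≤ (∫ g (y, ·)²) * (∫ h (·, x)²)`,
hence `‖K‖₂ ≤ ‖g‖₂ ‖h‖₂`. The triple integral is `⟪f, K ∘ swap⟫` in `L²(X × Y)`, and a second
Cauchy–Schwarz concludes.
-/

open MeasureTheory

section CauchySchwarz

variable {α : Type*} [MeasurableSpace α] {μ : Measure α} {f g : α → ℝ}

theorem sq_integral_mul_le_integral_sq_mul_integral_sq (hf : MemLp f 2 μ) (hg : MemLp g 2 μ) :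
    (∫ a, f a * g a ∂μ) ^ 2 ≤ (∫ a, f a ^ 2 ∂μ) * ∫ a, g a ^ 2 ∂μ := by
  have inner_toLp : ∀ {u v : α → ℝ} (hu : MemLp u 2 μ) (hv : MemLp v 2 μ),
      inner ℝ (hu.toLp u) (hv.toLp v) = ∫ a, u a * v a ∂μ := fun hu hv => by
    rw [L2.inner_def]
    refine integral_congr_ae ?_
    filter_upwards [hu.coeFn_toLp, hv.coeFn_toLp] with a hua hva
    rw [Real.inner_apply, hua, hva]
  simpa only [inner_toLp, sq] using real_inner_mul_inner_self_le (hf.toLp f) (hg.toLp g)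

theorem integral_mul_le_sqrt_integral_sq_mul_integral_sq (hf : MemLp f 2 μ) (hg : MemLp g 2 μ) :
    ∫ a, f a * g a ∂μ ≤ √((∫ a, f a ^ 2 ∂μ) * ∫ a, g a ^ 2 ∂μ) :=
  (le_abs_self _).trans (Real.abs_le_sqrt (sq_integral_mul_le_integral_sq_mul_integral_sq hf hg))

end CauchySchwarz

section Sections

variable {α β : Type*} [MeasurableSpace α] [MeasurableSpace β] {μ : Measure α} {ν : Measure β}
  [SFinite μ] [SFinite ν] {f : α × β → ℝ}

theorem MeasureTheory.MemLp.ae_memLp_two_prodMk_left (hf : MemLp f 2 (μ.prod ν)) :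
    ∀ᵐ x ∂μ, MemLp (fun y => f (x, y)) 2 ν := by
  filter_upwards [hf.integrable_sq.prod_right_ae, hf.1.prodMk_left] with x hx hmeas
  exact (memLp_two_iff_integrable_sq hmeas).2 hx

theorem MeasureTheory.MemLp.ae_memLp_two_prodMk_right (hf : MemLp f 2 (μ.prod ν)) :
    ∀ᵐ y ∂ν, MemLp (fun x => f (x, y)) 2 μ :=
  (hf.comp_measurePreserving Measure.measurePreserving_swap).ae_memLp_two_prodMk_left

end Sections

section KernelComp

variable {α β γ : Type*} [MeasurableSpace α] [MeasurableSpace β] [MeasurableSpace γ]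
  {μ : Measure α} {ν : Measure β} {ρ : Measure γ} [SFinite ν] [SFinite ρ]
  {g : α × β → ℝ} {h : β × γ → ℝ}

noncomputable def integralKernelComp (ν : Measure β) (g : α × β → ℝ) (h : β × γ → ℝ) :
    α × γ → ℝ :=
  fun p => ∫ b, g (p.1, b) * h (b, p.2) ∂ν

theorem MeasureTheory.AEStronglyMeasurable.integralKernelComp [SFinite μ]
    (hg : AEStronglyMeasurable g (μ.prod ν)) (hh : AEStronglyMeasurable h (ν.prod ρ)) :
    AEStronglyMeasurable (integralKernelComp ν g h) (μ.prod ρ) := by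
  have hg' : AEStronglyMeasurable (fun w : (α × γ) × β => g (w.1.1, w.2)) ((μ.prod ρ).prod ν) :=
    hg.comp_quasiMeasurePreserving
      (QuasiMeasurePreserving.prodMap Measure.quasiMeasurePreserving_fst (.id ν))
  have hh' : AEStronglyMeasurable (fun w : (α × γ) × β => h (w.2, w.1.2)) ((μ.prod ρ).prod ν) :=
    hh.comp_quasiMeasurePreserving <| Measure.measurePreserving_swap.quasiMeasurePreserving.comp
      (QuasiMeasurePreserving.prodMap Measure.quasiMeasurePreserving_snd (.id ν))
  exact (hg'.mul hh').integral_prod_right'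

theorem ae_sq_integralKernelComp_le [SFinite μ] (hg : MemLp g 2 (μ.prod ν))
    (hh : MemLp h 2 (ν.prod ρ)) :
    ∀ᵐ p ∂(μ.prod ρ), integralKernelComp ν g h p ^ 2 ≤
      (∫ b, g (p.1, b) ^ 2 ∂ν) * ∫ b, h (b, p.2) ^ 2 ∂ν := by
  filter_upwards [Measure.quasiMeasurePreserving_fst.ae hg.ae_memLp_two_prodMk_left,
    Measure.quasiMeasurePreserving_snd.ae hh.ae_memLp_two_prodMk_right] with p hgp hhp
  exact sq_integral_mul_le_integral_sq_mul_integral_sq hgp hhp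

theorem integrable_integral_sq_mul_integral_sq (hg : MemLp g 2 (μ.prod ν))
    (hh : MemLp h 2 (ν.prod ρ)) :
    Integrable (fun p : α × γ => (∫ b, g (p.1, b) ^ 2 ∂ν) * ∫ b, h (b, p.2) ^ 2 ∂ν) (μ.prod ρ) :=
  hg.integrable_sq.integral_prod_left.mul_prod hh.integrable_sq.integral_prod_right

theorem memLp_integralKernelComp [SFinite μ] (hg : MemLp g 2 (μ.prod ν))
    (hh : MemLp h 2 (ν.prod ρ)) :
    MemLp (integralKernelComp ν g h) 2 (μ.prod ρ) := by
  have hK := hg.1.integralKernelComp hh.1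
  refine (memLp_two_iff_integrable_sq hK).2 <|
    (integrable_integral_sq_mul_integral_sq hg hh).mono' (hK.pow 2) ?_
  filter_upwards [ae_sq_integralKernelComp_le hg hh] with p hp
  rwa [Real.norm_of_nonneg (sq_nonneg _)]

theorem integral_sq_integralKernelComp_le [SFinite μ] (hg : MemLp g 2 (μ.prod ν))
    (hh : MemLp h 2 (ν.prod ρ)) :
    ∫ p, integralKernelComp ν g h p ^ 2 ∂(μ.prod ρ) ≤
      (∫ q, g q ^ 2 ∂(μ.prod ν)) * ∫ q, h q ^ 2 ∂(ν.prod ρ) := calc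
  _ ≤ ∫ p : α × γ, (∫ b, g (p.1, b) ^ 2 ∂ν) * ∫ b, h (b, p.2) ^ 2 ∂ν ∂(μ.prod ρ) :=
    integral_mono_of_nonneg (.of_forall fun _ => sq_nonneg _)
      (integrable_integral_sq_mul_integral_sq hg hh) (ae_sq_integralKernelComp_le hg hh)
  _ = (∫ a, ∫ b, g (a, b) ^ 2 ∂ν ∂μ) * ∫ c, ∫ b, h (b, c) ^ 2 ∂ν ∂ρ :=
    integral_prod_mul (fun a => ∫ b, g (a, b) ^ 2 ∂ν) (fun c => ∫ b, h (b, c) ^ 2 ∂ν)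
  _ = _ := by rw [integral_prod _ hg.integrable_sq, integral_prod_symm _ hh.integrable_sq]

end KernelComp

theorem friedgut_triangle_integral_inequality
    {X Y Z : Type*} [MeasurableSpace X] [MeasurableSpace Y] [MeasurableSpace Z]
    (μX : Measure X) (μY : Measure Y) (μZ : Measure Z)
    [IsProbabilityMeasure μX] [IsProbabilityMeasure μY] [IsProbabilityMeasure μZ]
    (f : X × Y → ℝ) (g : Y × Z → ℝ) (h : Z × X → ℝ)
    (hf : MemLp f 2 (μX.prod μY)) (hg : MemLp g 2 (μY.prod μZ))
    (hh : MemLp h 2 (μZ.prod μX)) :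
    (∫ x, ∫ y, ∫ z, f (x, y) * g (y, z) * h (z, x) ∂μZ ∂μY ∂μX) ≤
      Real.sqrt ((∫ q, f q ^ 2 ∂(μX.prod μY)) * (∫ q, g q ^ 2 ∂(μY.prod μZ)) *
        (∫ q, h q ^ 2 ∂(μZ.prod μX))) := by
  set K := integralKernelComp μZ g h
  have hK : MemLp (fun q : X × Y => K q.swap) 2 (μX.prod μY) :=
    (memLp_integralKernelComp hg hh).comp_measurePreserving Measure.measurePreserving_swap
  calc (∫ x, ∫ y, ∫ z, f (x, y) * g (y, z) * h (z, x) ∂μZ ∂μY ∂μX)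
      = ∫ x, ∫ y, f (x, y) * K (y, x) ∂μY ∂μX := by
        simp_rw [mul_assoc, integral_const_mul]; rfl
    _ = ∫ q, f q * K q.swap ∂(μX.prod μY) := (integral_prod _ (hf.integrable_mul hK)).symm
    _ ≤ √((∫ q, f q ^ 2 ∂(μX.prod μY)) * ∫ q, K q.swap ^ 2 ∂(μX.prod μY)) :=
        integral_mul_le_sqrt_integral_sq_mul_integral_sq hf hK
    _ = √((∫ q, f q ^ 2 ∂(μX.prod μY)) * ∫ q, K q ^ 2 ∂(μY.prod μX)) := by
        rw [integral_prod_swap (fun q => K q ^ 2)]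
    _ ≤ _ := by
        rw [mul_assoc]
        gcongr
        exact integral_sq_integralKernelComp_le hg hh
end

section
/- Let μ₁,...,μ_k be probability measures and f₁,...,f_k square-integrable, where f_i : X_i × X_{i+1} → ℝ (indices mod k). Then ∫ f₁(x₁,x₂)f₂(x₂,x₃)···f_k(x_k,x₁) dx₁···dx_k ≤ sqrt( ∏_{i=1}^k ∫∫ f_i² dx_i dx_{i+1} ). -/
/-!
Write `g j x = G j (x j, x (j + 1))`. Integrating `g 0 ⋯ g n` over the interior vertices
`1, …, n` of the path `0 → 1 → ⋯ → n + 1` leaves a kernel `P n` in `x 0` and `x (n + 1)`, and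
`P (n + 1) (x 0, z) = ∫ P n (x 0, y) * G (n + 1) (y, z) dy`. Cauchy–Schwarz in `y`, followed by
the independence of the coordinates `x 0` and `z`, gives `‖P (n + 1)‖₂ ≤ ‖P n‖₂ ‖G (n + 1)‖₂`.
Closing the cycle, the integral is `∫ P (k - 2) (x 0, x (k - 1)) * G (k - 1) (x (k - 1), x 0)`,
and a last Cauchy–Schwarz on the product space finishes the proof. The argument runs in `ℝ≥0∞`
on the full product space, with `lmarginal` doing the partial integrations.
-/

open MeasureTheory Finset Function
open scoped ENNReal

theorem ENNReal.lintegral_mul_sq_le {α : Type*} [MeasurableSpace α] (μ : Measure α)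
    {f g : α → ℝ≥0∞} (hf : AEMeasurable f μ) (hg : AEMeasurable g μ) :
    (∫⁻ a, f a * g a ∂μ) ^ 2 ≤ (∫⁻ a, f a ^ 2 ∂μ) * ∫⁻ a, g a ^ 2 ∂μ := by
  have h := lintegral_mul_le_Lp_mul_Lq μ Real.HolderConjugate.two_two hf hg
  simp only [Pi.mul_apply, ENNReal.rpow_two] at h
  calc (∫⁻ a, f a * g a ∂μ) ^ 2
      ≤ ((∫⁻ a, f a ^ 2 ∂μ) ^ (1 / 2 : ℝ) * (∫⁻ a, g a ^ 2 ∂μ) ^ (1 / 2 : ℝ)) ^ 2 := by gcongr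
    _ = _ := by
      rw [mul_pow, ← ENNReal.rpow_natCast, ← ENNReal.rpow_natCast, ← ENNReal.rpow_mul,
        ← ENNReal.rpow_mul]
      norm_num

theorem Finset.measurable_prod_fn {α κ : Type*} [MeasurableSpace α] {g : κ → α → ℝ≥0∞}
    (s : Finset κ) (hg : ∀ j ∈ s, Measurable (g j)) : Measurable (∏ j ∈ s, g j) :=
  prod_induction _ Measurable (fun _ _ ↦ Measurable.mul) measurable_one hg

theorem DependsOn.pow {ι M : Type*} {X : ι → Type*} [Monoid M] {f : (∀ i, X i) → M}
    {s : Set ι} (hf : DependsOn f s) (n : ℕ) : DependsOn (f ^ n) s :=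
  fun _ _ h ↦ congrArg (· ^ n) (hf h)

theorem Set.InjOn.apply_notMem_image_Icc {ι : Type*} [DecidableEq ι] {v : ℕ → ι} {m n j : ℕ}
    (hv : Set.InjOn v (Finset.range m)) (hnm : n < m) (hjm : j < m) (hj : j = 0 ∨ n < j) :
    v j ∉ (Finset.Icc 1 n).image v := fun h ↦ by
  obtain ⟨i, hi, hij⟩ := Finset.mem_image.1 h
  rw [Finset.mem_Icc] at hi
  have := hv (by simp; omega) (by simpa using hjm) hij
  omega

namespace MeasureTheory

variable {ι : Type*} {X : ι → Type*} [∀ i, MeasurableSpace (X i)] {μ : ∀ i, Measure (X i)}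

theorem measurePreserving_pair [Fintype ι] [∀ i, IsProbabilityMeasure (μ i)] {i j : ι}
    (hij : i ≠ j) :
    MeasurePreserving (fun x : ∀ i, X i ↦ (x i, x j)) (Measure.pi μ) ((μ i).prod (μ j)) := by
  refine ⟨by fun_prop, ?_⟩
  have hind := (ProbabilityTheory.iIndepFun_pi (μ := μ) (X := fun _ ↦ id)
    fun _ ↦ aemeasurable_id).indepFun hij
  refine ((ProbabilityTheory.indepFun_iff_map_prod_eq_prod_map_map
    (measurable_pi_apply i).aemeasurable (measurable_pi_apply j).aemeasurable).1 hind).trans ?_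
  exact congr_arg₂ _ (measurePreserving_eval μ i).map_eq (measurePreserving_eval μ j).map_eq

section LMarginal

variable [DecidableEq ι] {s t : Finset ι} {f g : (∀ i, X i) → ℝ≥0∞}

theorem dependsOn_lmarginal (μ : ∀ i, Measure (X i)) (s : Finset ι) (f : (∀ i, X i) → ℝ≥0∞) :
    DependsOn (∫⋯∫⁻_s, f ∂μ) (↑s)ᶜ :=
  fun _ _ h ↦ lmarginal_congr μ f fun i hi ↦ h i hi

theorem _root_.DependsOn.lmarginal {t : Set ι} (hf : DependsOn f t) (s : Finset ι) :
    DependsOn (∫⋯∫⁻_s, f ∂μ) (t \ s) :=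
  fun _ _ h ↦ lintegral_congr fun y ↦ hf.updateFinset y h

theorem lmarginal_mul_of_dependsOn_compl (hf : Measurable f) (hg : DependsOn g (↑s)ᶜ) :
    ∫⋯∫⁻_s, f * g ∂μ = (∫⋯∫⁻_s, f ∂μ) * g := by
  ext x
  have hgx : ∀ y, g (updateFinset x s y) = g x := fun y ↦
    hg fun i hi ↦ by simp [updateFinset, show i ∉ s from hi]
  simp only [lmarginal, Pi.mul_apply, hgx]
  exact lintegral_mul_const _ (hf.comp measurable_updateFinset)

theorem lmarginal_mul_sq_le (hf : Measurable f) (hg : Measurable g) :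
    (∫⋯∫⁻_s, f * g ∂μ) ^ 2 ≤ (∫⋯∫⁻_s, f ^ 2 ∂μ) * ∫⋯∫⁻_s, g ^ 2 ∂μ := fun _ ↦
  ENNReal.lintegral_mul_sq_le _ (hf.comp measurable_updateFinset).aemeasurable
    (hg.comp measurable_updateFinset).aemeasurable

variable [∀ i, IsProbabilityMeasure (μ i)]

theorem lmarginal_of_dependsOn_compl (hf : DependsOn f (↑s)ᶜ) : ∫⋯∫⁻_s, f ∂μ = f := by
  ext x
  have hfx : ∀ y, f (updateFinset x s y) = f x := fun y ↦
    hf fun i hi ↦ by simp [updateFinset, show i ∉ s from hi]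
  simp [lmarginal, hfx]

theorem lintegral_lmarginal [Fintype ι] (hf : Measurable f) (s : Finset ι) :
    ∫⁻ x, (∫⋯∫⁻_s, f ∂μ) x ∂Measure.pi μ = ∫⁻ x, f x ∂Measure.pi μ :=
  lintegral_eq_of_lmarginal_eq s (hf.lmarginal μ) hf
    (lmarginal_of_dependsOn_compl (dependsOn_lmarginal μ s f))

theorem lintegral_mul_eq_mul_lintegral_of_dependsOn [Fintype ι] (hf : Measurable f)
    (hg : Measurable g) (hfs : DependsOn f s) (hgt : DependsOn g t) (hst : Disjoint s t) :
    ∫⁻ x, f x * g x ∂Measure.pi μ = (∫⁻ x, f x ∂Measure.pi μ) * ∫⁻ x, g x ∂Measure.pi μ := by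
  have hf' : DependsOn f (↑t)ᶜ := hfs.mono (by simpa [Set.subset_compl_iff_disjoint_right])
  have hconst : ∀ x, (∫⋯∫⁻_t, g ∂μ) x = ∫⁻ y, g y ∂Measure.pi μ := fun x ↦ by
    have hc : DependsOn (∫⋯∫⁻_t, g ∂μ) ∅ := by simpa using hgt.lmarginal (μ := μ) t
    rw [← lintegral_lmarginal hg t, lintegral_congr fun y ↦ hc.empty y x]
    simp
  calc ∫⁻ x, f x * g x ∂Measure.pi μ
      = ∫⁻ x, (∫⋯∫⁻_t, g * f ∂μ) x ∂Measure.pi μ := by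
        rw [lintegral_lmarginal (hg.mul hf)]; simp only [Pi.mul_apply, mul_comm]
    _ = ∫⁻ x, (∫⁻ y, g y ∂Measure.pi μ) * f x ∂Measure.pi μ := by
        simp only [lmarginal_mul_of_dependsOn_compl hg hf', Pi.mul_apply, hconst]
    _ = _ := by rw [lintegral_const_mul _ hf, mul_comm]

end LMarginal

section PathKernel

variable [DecidableEq ι] {v : ℕ → ι} {g : ℕ → (∀ i, X i) → ℝ≥0∞}

noncomputable def pathKernel (μ : ∀ i, Measure (X i)) (v : ℕ → ι) (g : ℕ → (∀ i, X i) → ℝ≥0∞)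
    (n : ℕ) : (∀ i, X i) → ℝ≥0∞ :=
  ∫⋯∫⁻_(Icc 1 n).image v, ∏ j ∈ range (n + 1), g j ∂μ

theorem dependsOn_pathKernel (hg : ∀ j, DependsOn (g j) {v j, v (j + 1)}) (n : ℕ) :
    DependsOn (pathKernel μ v g n) {v 0, v (n + 1)} := by
  have hprod : DependsOn (∏ j ∈ range (n + 1), g j) (v '' Set.Iic (n + 1)) := fun x y h ↦ by
    simp only [Finset.prod_apply]
    refine prod_congr rfl fun j hj ↦ hg j fun i hi ↦ h i ?_
    simp only [mem_range] at hj
    rcases hi with rfl | rfl <;> exact ⟨_, by simp; omega, rfl⟩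
  refine (hprod.lmarginal _).mono ?_
  rintro _ ⟨⟨j, hj, rfl⟩, hjS⟩
  simp only [coe_image, coe_Icc, Set.mem_image, Set.mem_Icc, not_exists, not_and] at hjS
  simp only [Set.mem_Iic] at hj
  rcases Nat.eq_zero_or_pos j with rfl | hj0
  · simp
  · obtain rfl : j = n + 1 := by by_contra h; exact hjS j ⟨hj0, by omega⟩ rfl
    simp

variable [∀ i, IsProbabilityMeasure (μ i)]

theorem measurable_pathKernel (hg : ∀ j, Measurable (g j)) (n : ℕ) :
    Measurable (pathKernel μ v g n) :=
  (measurable_prod_fn _ fun j _ ↦ hg j).lmarginal μ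

theorem pathKernel_succ (hg : ∀ j, Measurable (g j)) (hgv : ∀ j, DependsOn (g j) {v j, v (j + 1)})
    {n : ℕ} (hv : Set.InjOn v (range (n + 3))) :
    pathKernel μ v g (n + 1) = ∫⋯∫⁻_{v (n + 1)}, pathKernel μ v g n * g (n + 1) ∂μ := by
  have hg' : DependsOn (g (n + 1)) (↑((Icc 1 n).image v))ᶜ := (hgv (n + 1)).mono <| by
    rintro _ (rfl | rfl) <;>
      exact Set.InjOn.apply_notMem_image_Icc hv (by omega) (by omega) (by omega)
  have hm := measurable_prod_fn (range (n + 1)) fun j _ ↦ hg j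
  rw [pathKernel, pathKernel, ← insert_Icc_right_eq_Icc_add_one (by omega), image_insert,
    insert_eq, lmarginal_union _ _ (measurable_prod_fn _ fun j _ ↦ hg j) (disjoint_singleton_left.2
      (Set.InjOn.apply_notMem_image_Icc hv (by omega) (by omega) (by omega))),
    prod_range_succ, lmarginal_mul_of_dependsOn_compl hm hg']

theorem lintegral_pathKernel_sq_le [Fintype ι] (hg : ∀ j, Measurable (g j))
    (hgv : ∀ j, DependsOn (g j) {v j, v (j + 1)}) {n : ℕ} (hv : Set.InjOn v (range (n + 2))) :
    ∫⁻ x, pathKernel μ v g n x ^ 2 ∂Measure.pi μ ≤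
      ∏ j ∈ range (n + 1), ∫⁻ x, g j x ^ 2 ∂Measure.pi μ := by
  induction n with
  | zero => simp [pathKernel]
  | succ n ih =>
    set P := pathKernel μ v g n
    have hPm : Measurable (P ^ 2) := (measurable_pathKernel hg n).pow_const 2
    have hgm : Measurable (g (n + 1) ^ 2) := (hg _).pow_const 2
    have hPd : DependsOn (∫⋯∫⁻_{v (n + 1)}, P ^ 2 ∂μ) {v 0} :=
      (((dependsOn_pathKernel hgv n).pow 2).lmarginal _).mono (by intro; simp; tauto)
    have hgd : DependsOn (∫⋯∫⁻_{v (n + 1)}, g (n + 1) ^ 2 ∂μ) {v (n + 2)} :=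
      (((hgv (n + 1)).pow 2).lmarginal _).mono (by intro; simp; tauto)
    have hv0 : v 0 ≠ v (n + 2) := hv.ne (by simp) (by simp) (by omega)
    calc ∫⁻ x, pathKernel μ v g (n + 1) x ^ 2 ∂Measure.pi μ
        = ∫⁻ x, (∫⋯∫⁻_{v (n + 1)}, P * g (n + 1) ∂μ) x ^ 2 ∂Measure.pi μ := by
          rw [pathKernel_succ hg hgv hv]
      _ ≤ ∫⁻ x, (∫⋯∫⁻_{v (n + 1)}, P ^ 2 ∂μ) x * (∫⋯∫⁻_{v (n + 1)}, g (n + 1) ^ 2 ∂μ) x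
            ∂Measure.pi μ :=
          lintegral_mono fun x ↦ lmarginal_mul_sq_le (measurable_pathKernel hg n) (hg _) x
      _ = (∫⁻ x, P x ^ 2 ∂Measure.pi μ) * ∫⁻ x, g (n + 1) x ^ 2 ∂Measure.pi μ := by
          rw [lintegral_mul_eq_mul_lintegral_of_dependsOn (s := {v 0}) (hPm.lmarginal μ)
            (hgm.lmarginal μ) (by simpa using hPd) (by simpa using hgd) (disjoint_singleton.2 hv0),
            lintegral_lmarginal hPm, lintegral_lmarginal hgm]
          rfl
      _ ≤ (∏ j ∈ range (n + 1), ∫⁻ x, g j x ^ 2 ∂Measure.pi μ) *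
            ∫⁻ x, g (n + 1) x ^ 2 ∂Measure.pi μ := by
          gcongr
          exact ih (hv.mono (by simp))
      _ = ∏ j ∈ range (n + 2), ∫⁻ x, g j x ^ 2 ∂Measure.pi μ := (prod_range_succ _ _).symm

theorem lintegral_prod_sq_le_of_cycle [Fintype ι] (hg : ∀ j, Measurable (g j))
    (hgv : ∀ j, DependsOn (g j) {v j, v (j + 1)}) {n : ℕ} (hv : Set.InjOn v (range (n + 2)))
    (hcycle : v (n + 2) = v 0) :
    (∫⁻ x, ∏ j ∈ range (n + 2), g j x ∂Measure.pi μ) ^ 2 ≤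
      ∏ j ∈ range (n + 2), ∫⁻ x, g j x ^ 2 ∂Measure.pi μ := by
  have hlast : DependsOn (g (n + 1)) (↑((Icc 1 n).image v))ᶜ := (hgv (n + 1)).mono <| by
    rintro _ (rfl | rfl)
    · exact Set.InjOn.apply_notMem_image_Icc hv (by omega) (by omega) (by omega)
    · rw [hcycle]; exact Set.InjOn.apply_notMem_image_Icc hv (by omega) (by omega) (by omega)
  have hsplit : ∫⁻ x, ∏ j ∈ range (n + 2), g j x ∂Measure.pi μ =
      ∫⁻ x, pathKernel μ v g n x * g (n + 1) x ∂Measure.pi μ := by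
    have hm := (measurable_prod_fn (range (n + 1)) fun j _ ↦ hg j).mul (hg (n + 1))
    calc ∫⁻ x, ∏ j ∈ range (n + 2), g j x ∂Measure.pi μ
        = ∫⁻ x, ((∏ j ∈ range (n + 1), g j) * g (n + 1)) x ∂Measure.pi μ := by
          simp only [prod_range_succ _ (n + 1), Pi.mul_apply, Finset.prod_apply]
      _ = _ := by
          rw [← lintegral_lmarginal hm ((Icc 1 n).image v),
            lmarginal_mul_of_dependsOn_compl (measurable_prod_fn _ fun j _ ↦ hg j) hlast]
          rfl
  calc (∫⁻ x, ∏ j ∈ range (n + 2), g j x ∂Measure.pi μ) ^ 2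
      ≤ (∫⁻ x, pathKernel μ v g n x ^ 2 ∂Measure.pi μ) * ∫⁻ x, g (n + 1) x ^ 2 ∂Measure.pi μ :=
        hsplit ▸ ENNReal.lintegral_mul_sq_le _ (measurable_pathKernel hg n).aemeasurable
          (hg _).aemeasurable
    _ ≤ (∏ j ∈ range (n + 1), ∫⁻ x, g j x ^ 2 ∂Measure.pi μ) *
          ∫⁻ x, g (n + 1) x ^ 2 ∂Measure.pi μ := by
        gcongr
        exact lintegral_pathKernel_sq_le hg hgv hv
    _ = ∏ j ∈ range (n + 2), ∫⁻ x, g j x ^ 2 ∂Measure.pi μ := (prod_range_succ _ _).symm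

end PathKernel

end MeasureTheory

open MeasureTheory Fin.NatCast

theorem integral_sq_eq_toReal_lintegral_enorm_sq {α : Type*} [MeasurableSpace α] {μ : Measure α}
    {f : α → ℝ} (hf : AEStronglyMeasurable f μ) :
    ∫ a, f a ^ 2 ∂μ = (∫⁻ a, ‖f a‖ₑ ^ 2 ∂μ).toReal := by
  simpa using integral_norm_eq_lintegral_enorm (hf.pow 2)

theorem Fin.prod_univ_eq_prod_range_natCast {M : Type*} [CommMonoid M] (k : ℕ) [NeZero k]
    (f : Fin k → M) : ∏ i, f i = ∏ j ∈ range k, f j := by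
  simp_rw [← Fin.prod_univ_eq_prod_range (fun j ↦ f j), Fin.cast_val_eq_self]

theorem Fin.injOn_natCast_range (k : ℕ) [NeZero k] :
    Set.InjOn (Nat.cast : ℕ → Fin k) (range k) := fun a ha b hb hab ↦ by
  simpa [Fin.val_cast_of_lt (mem_range.1 ha), Fin.val_cast_of_lt (mem_range.1 hb)]
    using congrArg Fin.val hab

theorem lintegral_prod_cycle_sq_le (k : ℕ) [NeZero k] (hk : 2 ≤ k) {X : Fin k → Type*}
    [∀ i, MeasurableSpace (X i)] {μ : ∀ i, Measure (X i)} [∀ i, IsProbabilityMeasure (μ i)]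
    {G : ∀ i : Fin k, X i × X (i + 1) → ℝ≥0∞}
    (hG : ∀ i, AEMeasurable (G i) ((μ i).prod (μ (i + 1)))) :
    (∫⁻ x, ∏ i, G i (x i, x (i + 1)) ∂Measure.pi μ) ^ 2 ≤
      ∏ i, ∫⁻ q, G i q ^ 2 ∂(μ i).prod (μ (i + 1)) := by
  obtain ⟨n, rfl⟩ : ∃ n, k = n + 2 := ⟨k - 2, by omega⟩
  have hpair (i : Fin (n + 2)) := measurePreserving_pair (μ := μ) (i := i) (j := i + 1)
    fun h ↦ one_ne_zero (left_eq_add.1 h)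
  set G' := fun i ↦ (hG i).mk
  have hG'm (i : Fin (n + 2)) : Measurable (G' i) := (hG i).measurable_mk
  have hlhs : ∫⁻ x, ∏ i, G i (x i, x (i + 1)) ∂Measure.pi μ =
      ∫⁻ x, ∏ i, G' i (x i, x (i + 1)) ∂Measure.pi μ := by
    refine lintegral_congr_ae ?_
    filter_upwards [ae_all_iff.2 fun i ↦ (hpair i).quasiMeasurePreserving.ae_eq_comp
      (hG i).ae_eq_mk] with x hx
    exact prod_congr rfl fun i _ ↦ hx i
  have hrhs (i : Fin (n + 2)) : ∫⁻ q, G i q ^ 2 ∂(μ i).prod (μ (i + 1)) =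
      ∫⁻ x, G' i (x i, x (i + 1)) ^ 2 ∂Measure.pi μ := by
    rw [(hpair i).lintegral_comp ((hG'm i).pow_const 2)]
    exact lintegral_congr_ae ((hG i).ae_eq_mk.mono fun q hq ↦ congrArg (· ^ 2) hq)
  rw [hlhs, prod_congr rfl fun i _ ↦ hrhs i]
  simp only [Fin.prod_univ_eq_prod_range_natCast]
  refine lintegral_prod_sq_le_of_cycle (v := (Nat.cast : ℕ → Fin (n + 2)))
    (g := fun j x ↦ G' j (x j, x ((j : Fin (n + 2)) + 1)))
    (fun j ↦ (hG'm _).comp ((measurable_pi_apply _).prodMk (measurable_pi_apply _)))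
    (fun j x y h ↦ ?_) (Fin.injOn_natCast_range _) (by simp)
  simp only
  rw [h _ (by simp), h _ (by simp)]

theorem cyclic_integral_cauchy_schwarz
    (k : ℕ) [NeZero k] (hk : 3 ≤ k)
    (X : Fin k → Type*) [∀ i, MeasurableSpace (X i)]
    (μ : ∀ i, Measure (X i)) [∀ i, IsProbabilityMeasure (μ i)]
    (f : ∀ i : Fin k, X i × X (i + 1) → ℝ)
    (hf : ∀ i, MemLp (f i) 2 ((μ i).prod (μ (i + 1)))) :
    (∫ x : ∀ i, X i, ∏ i, f i (x i, x (i + 1)) ∂(Measure.pi μ)) ≤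
      Real.sqrt (∏ i, ∫ q, f i q ^ 2 ∂((μ i).prod (μ (i + 1)))) := by
  have hfin (i : Fin k) : ∫⁻ q, ‖f i q‖ₑ ^ 2 ∂(μ i).prod (μ (i + 1)) ≠ ⊤ := by
    simpa using (hf i).integrable_sq.2.ne
  have hcycle := lintegral_prod_cycle_sq_le k (by omega) fun i ↦ (hf i).1.enorm
  calc (∫ x, ∏ i, f i (x i, x (i + 1)) ∂Measure.pi μ)
      ≤ (∫⁻ x, ∏ i, ‖f i (x i, x (i + 1))‖ₑ ∂Measure.pi μ).toReal := by
        refine (Real.le_norm_self _).trans ((norm_integral_le_lintegral_norm _).trans_eq ?_)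
        simp [norm_prod, ENNReal.ofReal_prod_of_nonneg, Real.enorm_eq_ofReal_abs]
    _ ≤ √(∏ i, ∫ q, f i q ^ 2 ∂(μ i).prod (μ (i + 1))) := by
        refine (Real.le_sqrt ENNReal.toReal_nonneg (prod_nonneg fun i _ ↦
          integral_nonneg fun q ↦ sq_nonneg _)).2 ?_
        simp only [integral_sq_eq_toReal_lintegral_enorm_sq (hf _).1, ← ENNReal.toReal_prod,
          ← ENNReal.toReal_pow]
        exact ENNReal.toReal_mono (ENNReal.prod_ne_top fun i _ ↦ hfin i) hcycle
end
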